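/- In an n-player robust game where each player i's payoff f_i(α_i; x_i, x_{-i}) is concave in the uncertain parameter α_i ∈ U_i, define E_i(x_i, x_{-i}) := ρ_i^0(x_i, x_{-i}) − ρ_i^1(x_i, x_{-i}) and Ē_i(x_{-i}) := max_{x_i ∈ A_i} E_i(x_i, x_{-i}). Then for every opponent profile x_{-i} and every uncertainty level δ_i ∈ [0,1], the opportunity cost of uncertainty satisfies C_i^{δ_i}(x_{-i}) ≤ δ_i · Ē_i(x_{-i}), where C_i^{δ_i}(x_{-i}) = max_{x_i} ρ_i^0(x_i, x_{-i}) − ρ_i^0(x_i^+(δ_i), x_{-i}) with x_i^+(δ_i) any maximizer of ρ_i^{δ_i}(·, x_{-i}). -/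
import Mathlib


open Set

/-- for a player whose payoff `f(α; x_i, x_{-i})` is concave in the
uncertain parameter `α ∈ U`, the opportunity cost of uncertainty satisfies
`C^δ(x_{-i}) ≤ δ · Ē(x_{-i})`, where `Ē(x_{-i}) = max_{x_i} (ρ^0 − ρ^1)` and
`C^δ(x_{-i}) = max_{x_i} ρ^0(x_i, x_{-i}) − ρ^0(x_i^+(δ), x_{-i})` with
`x_i^+(δ)` a maximizer of `ρ^δ(·, x_{-i})`. -/
theorem opportunity_cost_le_delta_Ebar
    {V A B : Type*} [AddCommGroup V] [Module ℝ V]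
    (U : Set V) (hU : Convex ℝ U) (α₀ : V) (hα₀ : α₀ ∈ U)
    (f : V → A → B → ℝ)
    (hconc : ∀ (a : A) (b : B), ConcaveOn ℝ U (fun α => f α a b))
    (ρ : ℝ → A → B → ℝ)
    (hρ : ∀ δ ∈ Set.Icc (0:ℝ) 1, ∀ (a : A) (b : B),
      IsLeast ((fun α => f (δ • α + (1 - δ) • α₀) a b) '' U) (ρ δ a b))
    (b : B) (δ : ℝ) (hδ : δ ∈ Set.Icc (0:ℝ) 1)
    (M Ebar : ℝ) (xplus : A)
    (hM : IsGreatest (Set.range fun a : A => ρ 0 a b) M)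
    (hE : IsGreatest (Set.range fun a : A => ρ 0 a b - ρ 1 a b) Ebar)
    (hx : ∀ a : A, ρ δ a b ≤ ρ δ xplus b) :
    M - ρ 0 xplus b ≤ δ * Ebar := by
  obtain ⟨hδ0, hδ1⟩ := hδ
  have h01 : (0:ℝ) ∈ Set.Icc (0:ℝ) 1 := ⟨le_refl _, zero_le_one⟩
  have h11 : (1:ℝ) ∈ Set.Icc (0:ℝ) 1 := ⟨zero_le_one, le_refl _⟩
  -- ρ 0 a b = f α₀ a b
  have hρ0 : ∀ a : A, ρ 0 a b = f α₀ a b := by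
    intro a
    obtain ⟨⟨α, hα, hfa⟩, hlb⟩ := hρ 0 h01 a b
    simp only [zero_smul, sub_zero, one_smul, zero_add] at hfa
    exact hfa.symm
  -- ρ 1 a b ≤ f α a b for α ∈ U
  have hρ1 : ∀ (a : A) (α : V), α ∈ U → ρ 1 a b ≤ f α a b := by
    intro a α hα
    have hmem : f α a b ∈ (fun α => f ((1:ℝ) • α + ((1:ℝ) - 1) • α₀) a b) '' U :=
      ⟨α, hα, by show f ((1:ℝ) • α + ((1:ℝ) - 1) • α₀) a b = f α a b; simp⟩
    exact (hρ 1 h11 a b).2 hmem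
  -- ρ δ a b ≤ ρ 0 a b
  have hle0 : ∀ a : A, ρ δ a b ≤ ρ 0 a b := by
    intro a
    have hcomb : δ • α₀ + (1 - δ) • α₀ = α₀ := by
      rw [← add_smul]; ring_nf; exact one_smul ℝ α₀
    have hmem : f α₀ a b ∈ (fun α => f (δ • α + (1 - δ) • α₀) a b) '' U :=
      ⟨α₀, hα₀, by show f (δ • α₀ + (1 - δ) • α₀) a b = f α₀ a b; rw [hcomb]⟩
    rw [hρ0 a]; exact (hρ δ ⟨hδ0, hδ1⟩ a b).2 hmem
  -- key inequality: ρ 0 a b - ρ δ a b ≤ δ * (ρ 0 a b - ρ 1 a b)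
  have hkey : ∀ a : A, ρ 0 a b - ρ δ a b ≤ δ * (ρ 0 a b - ρ 1 a b) := by
    intro a
    obtain ⟨⟨α, hα, hfa⟩, _⟩ := hρ δ ⟨hδ0, hδ1⟩ a b
    have hc := (hconc a b).2 hα hα₀ hδ0 (sub_nonneg.mpr hδ1)
      (by ring : δ + (1 - δ) = 1)
    simp only [smul_eq_mul] at hc
    have h1 : ρ 1 a b ≤ f α a b := hρ1 a α hα
    have h0 : ρ 0 a b = f α₀ a b := hρ0 a
    have hδρ : ρ δ a b = f (δ • α + (1 - δ) • α₀) a b := hfa.symm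
    nlinarith [hc]
  -- M = ρ 0 a* b for some a*
  obtain ⟨⟨a', ha'⟩, hub⟩ := hM
  have hE' : ρ 0 a' b - ρ 1 a' b ≤ Ebar := hE.2 ⟨a', rfl⟩
  have h1 := hkey a'
  have h2 := hx a'
  have h3 := hle0 xplus
  have hδE : δ * (ρ 0 a' b - ρ 1 a' b) ≤ δ * Ebar :=
    mul_le_mul_of_nonneg_left hE' hδ0
  calc M - ρ 0 xplus b = ρ 0 a' b - ρ 0 xplus b := by rw [← ha']
    _ ≤ δ * (ρ 0 a' b - ρ 1 a' b) := by linarith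
    _ ≤ δ * Ebar := hδE
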